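/- arXiv:1002.1998 — 3 statements merged into one kernel-verified Lean document; each statement's English description precedes it below -/
import Mathlib

section
/- There exists a constant c_0 > 0 such that the set of positive integers N satisfying φ(N)/N > c_0 / log(log(log N)) has natural density one; equivalently, the set of N ≥ 16 with φ(N)/N ≤ c_0 / log(log(log N)) satisfies #{n ≤ x : n in the set}/x → 0 as x → ∞. -/
open scoped Classical

/-!
Euler's product gives `φ(n)/n = ∏_{p ∣ n} (1 - 1/p) ≥ exp(-2 ∑_{p ∣ n} 1/p)`, so `φ(n)/n` can only
be small when `∑_{p ∣ n} 1/p` is large. Swapping the order of summation,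
`∑_{n ≤ x} ∑_{p ∣ n} 1/p ≤ ∑_p x/p² ≤ (π²/6) x`, so by Markov's inequality at most `(π²/6) x / T`
integers `n ≤ x` have `∑_{p ∣ n} 1/p ≥ T`. With `c₀ = 1`, the exceptional `n` have
`∑_{p ∣ n} 1/p ≥ (log log log log n) / 2`, which tends to infinity.
-/

open Finset Filter Real Topology
open scoped Nat

noncomputable def primeRecipSum (n : ℕ) : ℝ := ∑ p ∈ n.primeFactors, (p : ℝ)⁻¹

lemma primeRecipSum_nonneg (n : ℕ) : 0 ≤ primeRecipSum n :=
  sum_nonneg fun _ _ => by positivity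

lemma Real.exp_neg_two_mul_le_one_sub {u : ℝ} (hu₀ : 0 ≤ u) (hu : u ≤ 1 / 2) :
    exp (-(2 * u)) ≤ 1 - u := by
  rw [exp_neg, inv_le_iff_one_le_mul₀' (exp_pos _)]
  nlinarith [add_one_le_exp (2 * u)]

lemma Nat.totient_div_self_eq_prod {n : ℕ} (hn : n ≠ 0) :
    (φ n : ℝ) / n = ∏ p ∈ n.primeFactors, (1 - (p : ℝ)⁻¹) := by
  have h := congrArg ((↑) : ℚ → ℝ) (Nat.totient_eq_mul_prod_factors n)
  push_cast at h
  rw [h, mul_div_cancel_left₀ _ (Nat.cast_ne_zero.mpr hn)]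

lemma exp_neg_two_mul_primeRecipSum_le {n : ℕ} (hn : n ≠ 0) :
    exp (-(2 * primeRecipSum n)) ≤ φ n / n := by
  rw [Nat.totient_div_self_eq_prod hn, primeRecipSum, mul_sum, ← sum_neg_distrib, exp_sum]
  refine prod_le_prod (fun _ _ => (exp_pos _).le) fun p hp =>
    exp_neg_two_mul_le_one_sub (by positivity) ?_
  have hp : (2 : ℝ) ≤ p := by exact_mod_cast (Nat.prime_of_mem_primeFactors hp).two_le
  rw [inv_le_comm₀ (by linarith) (by norm_num)]
  linarith

lemma log_le_two_mul_primeRecipSum {n : ℕ} (hn : n ≠ 0) {y : ℝ} (h : (φ n : ℝ) / n ≤ y⁻¹) :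
    log y ≤ 2 * primeRecipSum n := by
  have hφ : 0 < (φ n : ℝ) / n := by
    have := Nat.totient_pos.mpr (Nat.pos_of_ne_zero hn)
    positivity
  have hy : 0 < y := inv_pos.mp (hφ.trans_le h)
  rw [← exp_le_exp, exp_log hy, ← inv_le_inv₀ (exp_pos _) hy, ← exp_neg]
  exact (exp_neg_two_mul_primeRecipSum_le hn).trans h

lemma sum_range_primeRecipSum_le (x : ℕ) :
    ∑ n ∈ range (x + 1), primeRecipSum n ≤ π ^ 2 / 6 * x := by
  have hswap : ∑ n ∈ range (x + 1), primeRecipSum n =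
      ∑ p ∈ range (x + 1), ∑ n ∈ range (x + 1) with p ∈ n.primeFactors, (p : ℝ)⁻¹ :=
    sum_comm' fun n p => by
      simp only [mem_filter, mem_range]
      constructor
      · exact fun ⟨hn, hp⟩ => ⟨⟨hn, hp⟩, (Nat.le_of_mem_primeFactors hp).trans_lt hn⟩
      · exact fun ⟨h, _⟩ => h
  have hcount (p : ℕ) : #{n ∈ range (x + 1) | p ∈ n.primeFactors} ≤ x / p := by
    refine (card_le_card fun n hn => ?_).trans_eq (Nat.Ioc_filter_dvd_card_eq_div x p)
    simp only [mem_filter, mem_range, mem_Ioc, Nat.mem_primeFactors] at hn ⊢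
    exact ⟨⟨Nat.pos_of_ne_zero hn.2.2.2, by omega⟩, hn.2.2.1⟩
  calc ∑ n ∈ range (x + 1), primeRecipSum n
      = ∑ p ∈ range (x + 1), #{n ∈ range (x + 1) | p ∈ n.primeFactors} * (p : ℝ)⁻¹ := by
        simp only [hswap, sum_const, nsmul_eq_mul]
    _ ≤ ∑ p ∈ range (x + 1), x * (1 / (p : ℝ) ^ 2) := by
        refine sum_le_sum fun p _ => ?_
        calc (#{n ∈ range (x + 1) | p ∈ n.primeFactors} : ℝ) * (p : ℝ)⁻¹
            ≤ (x / p : ℕ) * (p : ℝ)⁻¹ := by gcongr; exact_mod_cast hcount p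
          _ ≤ x / p * (p : ℝ)⁻¹ := by gcongr; exact Nat.cast_div_le
          _ = x * (1 / (p : ℝ) ^ 2) := by ring
    _ = x * ∑ p ∈ range (x + 1), 1 / (p : ℝ) ^ 2 := (mul_sum ..).symm
    _ ≤ x * (π ^ 2 / 6) := by
        gcongr
        exact sum_le_hasSum _ (fun _ _ => by positivity) hasSum_zeta_two
    _ = π ^ 2 / 6 * x := mul_comm ..

lemma card_filter_le_primeRecipSum_le (x : ℕ) {T : ℝ} (hT : 0 < T) :
    (#{n ∈ range (x + 1) | T ≤ primeRecipSum n} : ℝ) ≤ π ^ 2 / 6 / T * x := by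
  rw [div_mul_eq_mul_div, le_div_iff₀ hT, ← nsmul_eq_mul]
  calc #{n ∈ range (x + 1) | T ≤ primeRecipSum n} • T
      ≤ ∑ n ∈ range (x + 1) with T ≤ primeRecipSum n, primeRecipSum n :=
        card_nsmul_le_sum _ _ _ fun n hn => (mem_filter.mp hn).2
    _ ≤ ∑ n ∈ range (x + 1), primeRecipSum n :=
        sum_le_sum_of_subset_of_nonneg (filter_subset _ _) fun n _ _ => primeRecipSum_nonneg n
    _ ≤ π ^ 2 / 6 * x := sum_range_primeRecipSum_le x

lemma tendsto_card_filter_range_div_zero (P : ℕ → Prop) [DecidablePred P]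
    (h : ∀ ε > 0, ∃ M : ℕ, ∀ x, (#{n ∈ range (x + 1) | P n} : ℝ) ≤ M + ε * x) :
    Tendsto (fun x : ℕ => (#{n ∈ range (x + 1) | P n} : ℝ) / x) atTop (𝓝 0) := by
  refine Metric.tendsto_nhds.mpr fun ε hε => ?_
  obtain ⟨M, hM⟩ := h (ε / 2) (by positivity)
  filter_upwards [(tendsto_const_div_atTop_nhds_zero_nat (M : ℝ)).eventually_lt_const
    (half_pos hε), eventually_ge_atTop 1] with x hMx hx
  have hx : (0 : ℝ) < x := by exact_mod_cast hx
  rw [dist_zero_right, norm_of_nonneg (by positivity)]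
  calc (#{n ∈ range (x + 1) | P n} : ℝ) / x ≤ (M + ε / 2 * x) / x := by gcongr; exact hM x
    _ = M / x + ε / 2 := by field_simp
    _ < ε := by linarith

/-- **Theorem 4 (paper).** There is a constant `c₀ > 0` such that
`φ(N)/N > c₀ / log log log N` for almost every integer `N`; equivalently, the set of
`N ≥ 16` with `φ(N)/N ≤ c₀ / log log log N` has natural density zero. -/
theorem totient_ratio_ae_lower_bound :
    ∃ c₀ : ℝ, 0 < c₀ ∧
      Filter.Tendsto
        (fun x : ℕ =>
          (((Finset.range (x + 1)).filter
            (fun n : ℕ => 16 ≤ n ∧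
              (Nat.totient n : ℝ) / (n : ℝ) ≤
                c₀ / Real.log (Real.log (Real.log (n : ℝ))))).card : ℝ) / (x : ℝ))
        Filter.atTop (nhds 0) := by
  refine ⟨1, one_pos, tendsto_card_filter_range_div_zero _ fun ε hε => ?_⟩
  set T := π ^ 2 / 6 / ε
  have hT : 0 < T := by positivity
  obtain ⟨M, hM⟩ := eventually_atTop.mp <| (tendsto_log_atTop.comp <| tendsto_log_atTop.comp <|
    tendsto_log_atTop.comp <| tendsto_log_atTop.comp tendsto_natCast_atTop_atTop).eventually_ge_atTop
    (2 * T)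
  refine ⟨M, fun x => ?_⟩
  have hsub : {n ∈ range (x + 1) | 16 ≤ n ∧ (φ n : ℝ) / n ≤ 1 / log (log (log n))} ⊆
      range M ∪ {n ∈ range (x + 1) | T ≤ primeRecipSum n} := by
    intro n hn
    simp only [mem_filter, mem_union, mem_range, one_div] at hn ⊢
    refine (lt_or_ge n M).imp id fun hnM => ⟨hn.1, ?_⟩
    have hlarge : 2 * T ≤ log (log (log (log n))) := hM n hnM
    linarith [log_le_two_mul_primeRecipSum (by omega) hn.2.2]
  calc _ ≤ (#(range M ∪ {n ∈ range (x + 1) | T ≤ primeRecipSum n}) : ℝ) := by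
        exact_mod_cast card_le_card hsub
    _ ≤ M + #{n ∈ range (x + 1) | T ≤ primeRecipSum n} := by
        exact_mod_cast (card_union_le _ _).trans_eq (by rw [card_range])
    _ ≤ M + ε * x := by
        grw [card_filter_le_primeRecipSum_le x hT, div_div_cancel₀ (by positivity)]
end

section
/- There exist constants a, b with 0 < a < 1 < b and a real x_0 such that for all real x ≥ x_0, one has a·x < ϑ(x) < b·x, where ϑ(x) = ∑_{p ≤ x, p prime} log p is the Chebyshev theta function. -/
/-!
The upper bound is `ϑ(x) = log (primorial ⌊x⌋) ≤ x log 4`. For the lower bound, every binomial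
coefficient `C(n, k)` divides `lcm(1, …, n) = exp ψ(n)`, so `2ⁿ ≤ (n + 1) exp ψ(n)`; together with
`ψ(x) - ϑ(x) = O(√x log x)` this gives `ϑ(x) ≥ x log 2 - o(x)`. As `1/2 < log 2` and `log 4 < 2`,
the constants `a = 1/2` and `b = 2` work.
-/

/-- The first Chebyshev function `ϑ(x) = ∑_{p ≤ x} log p`, summing over primes `p ≤ x`. -/
noncomputable def chebyshevTheta (x : ℝ) : ℝ :=
  ∑ p ∈ (Finset.range (⌊x⌋₊ + 1)).filter Nat.Prime, Real.log p

open Real Filter Asymptotics Chebyshev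

theorem chebyshevTheta_eq_theta : chebyshevTheta = θ := by
  funext x
  rw [chebyshevTheta, theta_eq_sum_primesLE, Nat.primesLE, Nat.primesBelow]

theorem isLittleO_sqrt_mul_log_id : (fun x ↦ √x * log x) =o[atTop] id := by
  have h : log =o[atTop] sqrt := by
    simpa only [← sqrt_eq_rpow] using isLittleO_log_rpow_atTop one_half_pos
  refine ((isBigO_refl sqrt atTop).mul_isLittleO h).congr' .rfl ?_
  filter_upwards [eventually_ge_atTop 0] with x hx using mul_self_sqrt hx

theorem isLittleO_log_add_const_id (c : ℝ) : (fun x ↦ log (x + c)) =o[atTop] id := by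
  have hshift : (fun x : ℝ ↦ x + c) =O[atTop] id :=
    (isBigO_refl id atTop).add (isLittleO_const_id_atTop c).isBigO
  exact (isLittleO_log_id_atTop.comp_tendsto
    (tendsto_atTop_add_const_right _ c tendsto_id)).trans_isBigO hshift

theorem eventually_mul_lt_theta {a : ℝ} (ha : a < log 2) : ∀ᶠ x in atTop, a * x < θ x := by
  have herr : (fun x ↦ log 2 + log (x + 2) + 2 * √x * log x) =o[atTop] id :=
    ((isLittleO_const_id_atTop _).add (isLittleO_log_add_const_id 2)).add
      (by simpa only [mul_assoc] using isLittleO_sqrt_mul_log_id.const_mul_left 2)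
  filter_upwards [herr.bound (half_pos (sub_pos.2 ha)), eventually_ge_atTop 1] with x herr_le hx
  rw [id, Real.norm_of_nonneg (zero_le_one.trans hx)] at herr_le
  have hgap : 0 < (log 2 - a) / 2 * x := by nlinarith
  linarith [theta_ge' hx, le_norm_self (log 2 + log (x + 2) + 2 * √x * log x)]

theorem theta_lt_mul_self {b : ℝ} (hb : log 4 < b) {x : ℝ} (hx : 0 < x) : θ x < b * x :=
  (theta_le_log4_mul_x hx.le).trans_lt (by gcongr)

/-- **Theorem 5(i) (Chebyshev).** There are constants `0 < a < 1 < b` and `x₀` such that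
`a·x < ϑ(x) < b·x` for all `x ≥ x₀`. -/
theorem chebyshevTheta_linear_bounds :
    ∃ a b : ℝ, 0 < a ∧ a < 1 ∧ 1 < b ∧ ∃ x₀ : ℝ, ∀ x : ℝ, x₀ ≤ x →
      a * x < chebyshevTheta x ∧ chebyshevTheta x < b * x := by
  have hlog2 : 1 / 2 < log 2 := by linarith [log_two_gt_d9]
  have hlog4 : log 4 < 2 := by
    rw [show (4 : ℝ) = 2 ^ 2 by norm_num, log_pow, Nat.cast_ofNat]
    linarith [log_two_lt_d9]
  obtain ⟨x₁, hx₁⟩ := eventually_atTop.1 (eventually_mul_lt_theta hlog2)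
  refine ⟨1 / 2, 2, by norm_num, by norm_num, by norm_num, max x₁ 1, fun x hx ↦ ?_⟩
  rw [chebyshevTheta_eq_theta]
  exact ⟨hx₁ x (le_of_max_le_left hx),
    theta_lt_mul_self hlog4 (by linarith [le_of_max_le_right hx])⟩
end

section
/- There exist a constant B_1 (the Mertens constant) and C > 0 such that for all real x ≥ 2, |∑_{p ≤ x, p prime} 1/p − log(log x) − B_1| ≤ C / log x. -/
/-!
Legendre's formula `log n! = ∑_{p ≤ n} v_p(n!) log p`, with `n/p - 1 ≤ v_p(n!) ≤ n/(p-1)`,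
Chebyshev's bound `θ(n) ≤ n log 4` and `log n! = n log n + O(n)` give Mertens' first theorem
`∑_{p ≤ n} log p / p = log n + O(1)`. Partial summation against `1 / log n` then shows that
`∑_{p ≤ n} 1/p - log log n` varies by `O(1 / log N)` over all `n ≥ N`; so it is a Cauchy
sequence, and its limit `B₁` is approached at that rate.
-/

open Finset Real Filter Topology
open scoped Nat

theorem Nat.div_le_factorization_factorial {p : ℕ} (hp : p.Prime) (n : ℕ) :
    n / p ≤ (n !).factorization p := by
  rcases lt_or_ge n p with h | h
  · simp [Nat.div_eq_of_lt h]
  · rw [Nat.factorization_factorial hp (Nat.lt_add_one (Nat.log p n))]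
    have h1 : 1 ∈ Ico 1 (Nat.log p n + 1) := by simp [h, hp.one_lt]
    simpa using single_le_sum (fun i _ => Nat.zero_le (n / p ^ i)) h1

theorem Nat.div_sub_one_le_factorization_factorial {p : ℕ} (hp : p.Prime) (n : ℕ) :
    (n : ℝ) / p - 1 ≤ (n !).factorization p := by
  refine (Nat.sub_one_lt_floor _).le.trans ?_
  rw [Nat.floor_div_eq_div]
  exact_mod_cast Nat.div_le_factorization_factorial hp n

theorem Nat.factorization_factorial_le_div_add {p : ℕ} (hp : p.Prime) (n : ℕ) :
    ((n !).factorization p : ℝ) ≤ n / p + 2 * n / p ^ 2 := by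
  have hp2 : (2 : ℝ) ≤ p := by exact_mod_cast hp.two_le
  calc ((n !).factorization p : ℝ) ≤ ((n / (p - 1) : ℕ) : ℝ) := by
        exact_mod_cast Nat.factorization_factorial_le_div_pred hp n
    _ ≤ n / (p - 1 : ℕ) := Nat.cast_div_le
    _ = n / (p - 1) := by rw [Nat.cast_sub hp.one_le, Nat.cast_one]
    _ ≤ n / p + 2 * n / p ^ 2 := by
        rw [div_add_div _ _ (by positivity) (by positivity),
          div_le_div_iff₀ (by linarith) (by positivity)]
        have hp0 : (0 : ℝ) ≤ p := by positivity
        have := mul_nonneg (mul_nonneg n.cast_nonneg hp0) (sub_nonneg.2 hp2)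
        linarith

theorem Real.log_factorial_eq_sum_primesLE (n : ℕ) :
    log (n ! : ℕ) = ∑ p ∈ n.primesLE, (n !).factorization p * log p := by
  rw [Real.log_nat_eq_sum_factorization]
  refine Finsupp.sum_of_support_subset _ (fun p hp => ?_) _ (by simp)
  rw [Nat.support_factorization, Nat.mem_primeFactors] at hp
  exact Nat.mem_primesLE.mpr ⟨hp.1.dvd_factorial.mp hp.2.1, hp.1⟩

theorem Real.summable_log_div_sq : Summable fun n : ℕ => log n / (n : ℝ) ^ 2 := by
  refine Summable.of_nonneg_of_le (fun n => by positivity) (fun n => ?_)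
    ((Real.summable_nat_rpow.mpr (by norm_num : (-3 / 2 : ℝ) < -1)).mul_left 2)
  rcases n.eq_zero_or_pos with rfl | hn
  · simp
  · have hn' : (0 : ℝ) < n := by exact_mod_cast hn
    have hlog := Real.log_le_rpow_div hn'.le (by norm_num : (0 : ℝ) < 1 / 2)
    calc log n / (n : ℝ) ^ 2 ≤ (n : ℝ) ^ (1 / 2 : ℝ) / (1 / 2) / (n : ℝ) ^ 2 := by gcongr
      _ = 2 * (n : ℝ) ^ (-3 / 2 : ℝ) := by
        rw [show (-3 / 2 : ℝ) = 1 / 2 - (2 : ℕ) by norm_num, Real.rpow_sub hn',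
          Real.rpow_natCast]
        ring

theorem Real.log_sub_log_le_div {x y : ℝ} (hx : 0 < x) (hy : 0 < y) :
    log y - log x ≤ (y - x) / x := by
  rw [← log_div hy.ne' hx.ne', sub_div, div_self hx.ne']
  exact log_le_sub_one_of_pos (div_pos hy hx)

theorem Real.log_add_one_sub_log_le_one {x : ℝ} (hx : 1 ≤ x) : log (x + 1) - log x ≤ 1 := by
  refine (log_sub_log_le_div (by linarith) (by linarith)).trans ?_
  rw [add_sub_cancel_left, div_le_one (by linarith)]
  exact hx

theorem Real.abs_sub_div_sub_log_sub_log_le {x y : ℝ} (hx : 0 < x) (hxy : x ≤ y)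
    (hyx : y - x ≤ 1) : |(y - x) / y - (log y - log x)| ≤ 1 / x - 1 / y := by
  have hy : 0 < y := hx.trans_le hxy
  have hlow : (y - x) / y ≤ log y - log x := by
    have := one_sub_inv_le_log_of_pos (div_pos hy hx)
    rwa [log_div hy.ne' hx.ne', inv_div, one_sub_div hy.ne'] at this
  have hinv : 0 ≤ 1 / x - 1 / y := sub_nonneg.2 (one_div_le_one_div_of_le hx hxy)
  have hgap : (y - x) / x - (y - x) / y = (y - x) * (1 / x - 1 / y) := by ring
  rw [abs_sub_comm, abs_of_nonneg (sub_nonneg.2 hlow)]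
  linarith [log_sub_log_le_div hx hy, mul_le_of_le_one_left hinv hyx]

theorem Real.abs_sum_Ico_div_log_sub_log_log_le {N M : ℕ} (hN : 2 ≤ N) (hNM : N ≤ M) :
    |∑ n ∈ Ico N M, ((log (n + 1 : ℕ) - log n) / log (n + 1 : ℕ) -
      (log (log (n + 1 : ℕ)) - log (log n)))| ≤ 1 / log N := by
  refine (abs_sum_le_sum_abs _ _).trans ?_
  calc _ ≤ ∑ n ∈ Ico N M, (1 / log n - 1 / log (n + 1 : ℕ)) := by
        gcongr with n hn
        have hn : (2 : ℝ) ≤ n := by exact_mod_cast hN.trans (mem_Ico.mp hn).1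
        refine abs_sub_div_sub_log_sub_log_le (log_pos (by linarith))
          (log_le_log (by linarith) (by push_cast; linarith)) ?_
        push_cast
        exact log_add_one_sub_log_le_one (by linarith)
    _ = 1 / log N - 1 / log M := by
        rw [← neg_sub, ← sum_Ico_sub (fun n : ℕ => 1 / log n) hNM, ← sum_neg_distrib]
        exact sum_congr rfl fun n _ => (neg_sub _ _).symm
    _ ≤ 1 / log N := sub_le_self _ (by positivity)

theorem abs_sum_Ico_sub_mul_le {E β : ℕ → ℝ} {c : ℝ} {N M : ℕ} (hNM : N ≤ M)
    (hE : ∀ n, |E n| ≤ c) (hβ : AntitoneOn β (Set.Icc N M)) (hβM : 0 ≤ β M) :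
    |∑ n ∈ Ico N M, (E (n + 1) - E n) * β n| ≤ 2 * c * β N := by
  have hsplit : ∑ n ∈ Ico N M, (E (n + 1) - E n) * β n =
      (E M * β M - E N * β N) + ∑ n ∈ Ico N M, E (n + 1) * (β n - β (n + 1)) := by
    rw [← sum_Ico_sub (fun n => E n * β n) hNM, ← sum_add_distrib]
    exact sum_congr rfl fun n _ => by ring
  have hstep : ∀ n ∈ Ico N M, 0 ≤ β n - β (n + 1) := fun n hn => by
    rw [mem_Ico] at hn
    exact sub_nonneg.2 (hβ ⟨hn.1, hn.2.le⟩ ⟨by omega, hn.2⟩ (Nat.le_succ n))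
  have htel : ∑ n ∈ Ico N M, (β n - β (n + 1)) = β N - β M := by
    rw [← neg_sub, ← sum_Ico_sub β hNM, ← sum_neg_distrib]
    exact sum_congr rfl fun n _ => (neg_sub _ _).symm
  have hsum : |∑ n ∈ Ico N M, E (n + 1) * (β n - β (n + 1))| ≤ c * (β N - β M) := by
    calc _ ≤ ∑ n ∈ Ico N M, |E (n + 1) * (β n - β (n + 1))| := abs_sum_le_sum_abs _ _
      _ ≤ ∑ n ∈ Ico N M, c * (β n - β (n + 1)) := by
          gcongr with n hn
          rw [abs_mul, abs_of_nonneg (hstep n hn)]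
          exact mul_le_mul_of_nonneg_right (hE _) (hstep n hn)
      _ = c * (β N - β M) := by rw [← mul_sum, htel]
  have hβN : β M ≤ β N := hβ ⟨le_rfl, hNM⟩ ⟨hNM, le_rfl⟩ hNM
  have hEM : |E M * β M| ≤ c * β M := by
    rw [abs_mul, abs_of_nonneg hβM]; exact mul_le_mul_of_nonneg_right (hE M) hβM
  have hEN : |E N * β N| ≤ c * β N := by
    rw [abs_mul, abs_of_nonneg (hβM.trans hβN)]
    exact mul_le_mul_of_nonneg_right (hE N) (hβM.trans hβN)
  rw [hsplit]
  calc _ ≤ |E M * β M| + |E N * β N| + |∑ n ∈ Ico N M, E (n + 1) * (β n - β (n + 1))| :=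
        (abs_add_le _ _).trans (by gcongr; exact abs_sub _ _)
    _ ≤ 2 * c * β N := by linarith

theorem exists_abs_sub_le_of_abs_sub_le {u ε : ℕ → ℝ} {n₀ : ℕ}
    (hε : Tendsto ε atTop (𝓝 0)) (hu : ∀ n ≥ n₀, ∀ m ≥ n, |u m - u n| ≤ ε n) :
    ∃ B, ∀ n ≥ n₀, |u n - B| ≤ ε n := by
  have hcauchy : CauchySeq u := by
    refine Metric.cauchySeq_iff'.2 fun δ hδ => ?_
    obtain ⟨N, hN, hNn₀⟩ :=
      ((hε.eventually (gt_mem_nhds hδ)).and (eventually_ge_atTop n₀)).exists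
    exact ⟨N, fun n hn => (hu N hNn₀ n hn).trans_lt hN⟩
  obtain ⟨B, hB⟩ := cauchySeq_tendsto_of_complete hcauchy
  refine ⟨B, fun n hn => ?_⟩
  rw [abs_sub_comm]
  exact le_of_tendsto (hB.sub_const (u n)).abs ((eventually_ge_atTop n).mono (hu n hn))

namespace Mertens

noncomputable def logDivSum (n : ℕ) : ℝ := ∑ p ∈ n.primesLE, log p / p

noncomputable def invSum (n : ℕ) : ℝ := ∑ p ∈ n.primesLE, (1 : ℝ) / p

theorem mul_logDivSum_le (n : ℕ) : n * logDivSum n ≤ log (n ! : ℕ) + log 4 * n := by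
  have hθ := Chebyshev.theta_le_log4_mul_x n.cast_nonneg
  rw [Chebyshev.theta_eq_sum_primesLE_log] at hθ
  have hsum : n * logDivSum n - ∑ p ∈ n.primesLE, log p ≤ log (n ! : ℕ) := by
    rw [logDivSum, mul_sum, ← sum_sub_distrib, log_factorial_eq_sum_primesLE]
    gcongr with p hp
    have hp := Nat.prime_of_mem_primesLE hp
    calc (n : ℝ) * (log p / p) - log p = ((n : ℝ) / p - 1) * log p := by ring
      _ ≤ _ := mul_le_mul_of_nonneg_right (Nat.div_sub_one_le_factorization_factorial hp n)
          (log_natCast_nonneg p)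
  linarith

theorem log_factorial_le_mul_logDivSum (n : ℕ) :
    log (n ! : ℕ) ≤ n * (logDivSum n + 2 * ∑' k : ℕ, log k / (k : ℝ) ^ 2) := by
  have htail :
      ∑ p ∈ n.primesLE, log p / (p : ℝ) ^ 2 ≤ ∑' k : ℕ, log k / (k : ℝ) ^ 2 :=
    summable_log_div_sq.sum_le_tsum _ fun k _ => by positivity
  calc log (n ! : ℕ) ≤ ∑ p ∈ n.primesLE, ((n : ℝ) / p + 2 * n / p ^ 2) * log p := by
        rw [log_factorial_eq_sum_primesLE]
        gcongr with p hp
        exact Nat.factorization_factorial_le_div_add (Nat.prime_of_mem_primesLE hp) n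
    _ = n * (logDivSum n + 2 * ∑ p ∈ n.primesLE, log p / (p : ℝ) ^ 2) := by
        rw [logDivSum, mul_sum, mul_add, mul_sum, mul_sum, ← sum_add_distrib]
        exact sum_congr rfl fun p _ => by ring
    _ ≤ _ := by gcongr

/-- Mertens' first theorem. -/
theorem exists_abs_logDivSum_sub_log_le : ∃ c, ∀ n, |logDivSum n - log n| ≤ c := by
  set K := ∑' k : ℕ, log k / (k : ℝ) ^ 2
  have hK : 0 ≤ K := tsum_nonneg fun k => by positivity
  refine ⟨log 4 + 1 + 2 * K, fun n => ?_⟩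
  have hlog4 : 0 ≤ log 4 := log_nonneg (by norm_num)
  rcases n.eq_zero_or_pos with rfl | hn
  · simp [logDivSum]; linarith
  have hn' : (0 : ℝ) < n := by exact_mod_cast hn
  have hlow := Stirling.le_log_factorial_stirling hn.ne'
  have hup : log (n ! : ℕ) ≤ n * log n := by
    rw [← log_pow]; exact log_le_log (by positivity) (by exact_mod_cast Nat.factorial_le_pow n)
  have h1 := mul_logDivSum_le n
  have h2 := log_factorial_le_mul_logDivSum n
  have h2π : 0 ≤ log (2 * π) := log_nonneg (by linarith [pi_gt_three])
  have hlogn := log_natCast_nonneg n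
  have hn4 := mul_nonneg hn'.le hlog4
  have hnK := mul_nonneg hn'.le hK
  rw [abs_le]
  constructor
  · refine le_of_mul_le_mul_left ?_ hn'
    linarith
  · refine le_of_mul_le_mul_left ?_ hn'
    linarith

theorem invSum_succ_sub (n : ℕ) :
    invSum (n + 1) - invSum n = (logDivSum (n + 1) - logDivSum n) / log (n + 1 : ℕ) := by
  rw [invSum, invSum, logDivSum, logDivSum, Nat.primesLE_succ]
  split_ifs with hp
  · have hlog : log (n + 1 : ℕ) ≠ 0 := (log_pos (by exact_mod_cast hp.one_lt)).ne'
    rw [sum_insert (Nat.notMem_primesLE n), sum_insert (Nat.notMem_primesLE n)]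
    field_simp
    ring
  · simp

theorem abs_invSum_sub_loglog_sub_le {c : ℝ} (hc : ∀ n, |logDivSum n - log n| ≤ c)
    {N M : ℕ} (hN : 2 ≤ N) (hNM : N ≤ M) :
    |(invSum M - log (log M)) - (invSum N - log (log N))| ≤ (2 * c + 1) / log N := by
  set E : ℕ → ℝ := fun n => logDivSum n - log n
  set β : ℕ → ℝ := fun n => 1 / log (n + 1 : ℕ)
  have hsplit : (invSum M - log (log M)) - (invSum N - log (log N)) =
      ∑ n ∈ Ico N M, ((log (n + 1 : ℕ) - log n) / log (n + 1 : ℕ) -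
          (log (log (n + 1 : ℕ)) - log (log n))) +
        ∑ n ∈ Ico N M, (E (n + 1) - E n) * β n := by
    rw [sub_sub_sub_comm, ← sum_Ico_sub invSum hNM, ← sum_Ico_sub (fun n => log (log n)) hNM,
      ← sum_sub_distrib, ← sum_add_distrib]
    refine sum_congr rfl fun n _ => ?_
    rw [invSum_succ_sub]
    ring
  have hmain := abs_sum_Ico_div_log_sub_log_log_le hN hNM
  have hβ : AntitoneOn β (Set.Icc N M) := fun a ha b _ hab => by
    have ha2 : (2 : ℝ) ≤ a + 1 := by exact_mod_cast hN.trans ha.1 |>.trans (Nat.le_succ a)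
    exact one_div_le_one_div_of_le (log_pos (by push_cast; linarith))
      (log_le_log (by push_cast; linarith) (by exact_mod_cast Nat.succ_le_succ hab))
  have hE : |∑ n ∈ Ico N M, (E (n + 1) - E n) * β n| ≤ 2 * c * β N :=
    abs_sum_Ico_sub_mul_le hNM hc hβ (by positivity)
  have hβN : β N ≤ 1 / log N :=
    one_div_le_one_div_of_le (log_pos (by exact_mod_cast hN))
      (log_le_log (by positivity) (by push_cast; linarith))
  have hc0 : 0 ≤ c := (abs_nonneg _).trans (hc 0)
  rw [hsplit]
  calc _ ≤ 1 / log N + 2 * c * β N := (abs_add_le _ _).trans (add_le_add hmain hE)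
    _ ≤ 1 / log N + 2 * c * (1 / log N) := by gcongr
    _ = (2 * c + 1) / log N := by ring

theorem exists_abs_invSum_sub_loglog_sub_le :
    ∃ C B : ℝ, 0 ≤ C ∧ ∀ N ≥ 2, |invSum N - log (log N) - B| ≤ C / log N := by
  obtain ⟨c, hc⟩ := exists_abs_logDivSum_sub_log_le
  have hε : Tendsto (fun n : ℕ => (2 * c + 1) / log n) atTop (𝓝 0) :=
    tendsto_const_nhds.div_atTop (tendsto_log_atTop.comp tendsto_natCast_atTop_atTop)
  obtain ⟨B, hB⟩ := exists_abs_sub_le_of_abs_sub_le hε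
    fun N hN M hNM => abs_invSum_sub_loglog_sub_le hc hN hNM
  have hc0 : 0 ≤ c := (abs_nonneg _).trans (hc 0)
  exact ⟨2 * c + 1, B, by positivity, hB⟩

end Mertens

theorem Real.log_le_two_mul_log_floor {x : ℝ} (hx : 2 ≤ x) : log x ≤ 2 * log ⌊x⌋₊ := by
  have hN : (2 : ℝ) ≤ ⌊x⌋₊ := by exact_mod_cast Nat.le_floor (by exact_mod_cast hx)
  calc log x ≤ log ((⌊x⌋₊ : ℝ) ^ 2) :=
        log_le_log (by linarith) (by nlinarith [Nat.lt_floor_add_one x])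
    _ = 2 * log ⌊x⌋₊ := by rw [log_pow, Nat.cast_ofNat]

theorem Real.abs_log_log_sub_log_log_floor_le {x : ℝ} (hx : 2 ≤ x) :
    |log (log x) - log (log ⌊x⌋₊)| ≤ 1 / log ⌊x⌋₊ := by
  have hN : (2 : ℝ) ≤ ⌊x⌋₊ := by exact_mod_cast Nat.le_floor (by exact_mod_cast hx)
  have hlogN : 0 < log ⌊x⌋₊ := log_pos (by linarith)
  have hle : log ⌊x⌋₊ ≤ log x := log_le_log (by linarith) (Nat.floor_le (by linarith))
  have hgap : log x - log ⌊x⌋₊ ≤ 1 :=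
    (sub_le_sub_right (log_le_log (by linarith) (Nat.lt_floor_add_one x).le) _).trans
      (log_add_one_sub_log_le_one (by linarith))
  rw [abs_of_nonneg (sub_nonneg.2 (log_le_log hlogN hle))]
  refine (log_sub_log_le_div hlogN (hlogN.trans_le hle)).trans ?_
  exact div_le_div_of_nonneg_right hgap hlogN.le

/-- **Theorem 7(i) (Mertens).** There are a constant `B₁` (the Mertens constant) and `C > 0`
such that `|∑_{p ≤ x} 1/p − log log x − B₁| ≤ C / log x` for all `x ≥ 2`. -/
theorem mertens_second_theorem :
    ∃ B₁ : ℝ, ∃ C : ℝ, 0 < C ∧ ∀ x : ℝ, 2 ≤ x →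
      |(∑ p ∈ (Finset.range (⌊x⌋₊ + 1)).filter Nat.Prime, (1 : ℝ) / p) -
          Real.log (Real.log x) - B₁| ≤ C / Real.log x := by
  obtain ⟨C, B, hC, hB⟩ := Mertens.exists_abs_invSum_sub_loglog_sub_le
  refine ⟨B, 2 * (C + 1), by positivity, fun x hx => ?_⟩
  have hN : 2 ≤ ⌊x⌋₊ := Nat.le_floor (by exact_mod_cast hx)
  have hlogx : 0 < log x := log_pos (by linarith)
  have hfloor : (C + 1) / log ⌊x⌋₊ ≤ 2 * (C + 1) / log x := by
    rw [div_le_div_iff₀ (log_pos (by exact_mod_cast hN)) hlogx]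
    nlinarith [log_le_two_mul_log_floor hx]
  calc _ = |(Mertens.invSum ⌊x⌋₊ - log (log ⌊x⌋₊) - B) -
        (log (log x) - log (log ⌊x⌋₊))| := by
        rw [Mertens.invSum, Nat.primesLE_eq_filter_range]
        congr 1
        ring
    _ ≤ C / log ⌊x⌋₊ + 1 / log ⌊x⌋₊ :=
        (abs_sub _ _).trans (add_le_add (hB _ hN) (abs_log_log_sub_log_log_floor_le hx))
    _ = (C + 1) / log ⌊x⌋₊ := by ring
    _ ≤ 2 * (C + 1) / log x := hfloor
end
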